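/- Let U be a Chalker–Coddington unitary whose scattering matrices S_z = q_z [[r_z, −t_z],[conj(t_z), conj(r_z)]] satisfy 0 < c₁ < |r_z| < c₂ < 1 for all z ∈ ℤ×2ℤ and some constants c₁, c₂ ∈ (0,1) (in particular this holds for the critical model with |r_z| = |t_z| = 1/√2 and arbitrary phases). Then there exists an orthogonal projection P on ℓ²(ℤ²; ℂ) such that the flux Φ := U*PU − P has finite-dimensional eigenspaces ker(Φ − 1) and ker(Φ + 1) with dim ker(Φ − 1) ≠ dim ker(Φ + 1), i.e. ind(Φ) ≠ 0. -/

import Mathlib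

open ContinuousLinearMap

noncomputable section

/-- The Hilbert space `ℓ²(ℤ²; ℂ)` of the Chalker–Coddington model. -/
abbrev CCH := lp (fun _ : ℤ × ℤ => ℂ) 2

/-- The canonical basis vector `|j,k⟩`. -/
def ket (p : ℤ × ℤ) : CCH := lp.single 2 p 1

/-- Labels of the scattering matrices: the cell `(false, j, k)` is the even cell
`z = (2j, 2k)`, the cell `(true, j, k)` is the odd cell `z = (2j+1, 2k)`. -/
abbrev Cell := Bool × ℤ × ℤ

/-!
Take for `P` the orthogonal projection onto `ℓ²` of the half-row `H = {(m, 0) | m ≥ 1}`. For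
the two projections `P` and `Q = U*PU` one has `ker (Q - P - 1) = ker P ∩ ran Q` and
`ker (Q - P + 1) = ran P ∩ ker Q`: states supported off `H` that `U` maps into `ℓ²(H)`, and
states supported on `H` that `U` maps off `H`. Since `U` acts cell by cell through scattering
matrices all of whose entries are nonzero (as `0 < |r_z| < 1`), such a state has to vanish on
the incoming links of every cell, with one exception: the cell at the origin, whose outgoing
link `(1, 0)` is the first site of `H`, carries a one-dimensional family of states of the first
kind. So the two kernels have dimensions `1` and `0`.
-/

open scoped InnerProductSpace lp ComplexConjugate

theorem IsStarProjection.star_mul_mul_of_mem_unitary {R : Type*} [Monoid R] [StarMul R]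
    {p u : R} (hp : IsStarProjection p) (hu : u ∈ unitary R) :
    IsStarProjection (star u * p * u) where
  isIdempotentElem := by
    rw [IsIdempotentElem]
    calc star u * p * u * (star u * p * u) = star u * (p * (u * star u) * p) * u := by
          simp only [mul_assoc]
      _ = star u * p * u := by
          rw [Unitary.mul_star_self_of_mem hu, mul_one, hp.isIdempotentElem.eq, mul_assoc]
  isSelfAdjoint := by
    rw [IsSelfAdjoint, star_mul, star_mul, star_star, hp.isSelfAdjoint.star_eq, mul_assoc]

section StarProjection

variable {𝕜 E : Type*} [RCLike 𝕜] [NormedAddCommGroup E] [InnerProductSpace 𝕜 E]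
  [CompleteSpace E] {P Q : E →L[𝕜] E}

theorem IsStarProjection.inner_apply_self (hP : IsStarProjection P) (x : E) :
    ⟪x, P x⟫_𝕜 = (‖P x‖ : 𝕜) ^ 2 := by
  calc ⟪x, P x⟫_𝕜 = ⟪x, P (P x)⟫_𝕜 := by
        rw [← mul_apply_eq_comp, hP.isIdempotentElem.eq]
    _ = ⟪P x, P x⟫_𝕜 := by
        rw [← adjoint_inner_left, ← star_eq_adjoint, hP.isSelfAdjoint.star_eq]
    _ = _ := inner_self_eq_norm_sq_to_K _

theorem IsStarProjection.norm_apply_le (hP : IsStarProjection P) (x : E) : ‖P x‖ ≤ ‖x‖ :=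
  (P.le_opNorm x).trans (mul_le_of_le_one_left (norm_nonneg x) (hP.norm_le P))

theorem IsStarProjection.sub_sub_one_apply_eq_zero_iff (hP : IsStarProjection P)
    (hQ : IsStarProjection Q) (x : E) : (Q - P - 1) x = 0 ↔ P x = 0 ∧ Q x = x := by
  refine ⟨fun hx => ?_, fun ⟨hPx, hQx⟩ => by simp [hPx, hQx]⟩
  have hQx : Q x = P x + x := by
    simpa [sub_sub, sub_eq_zero] using hx
  have hnorm : ‖Q x‖ ^ 2 = ‖P x‖ ^ 2 + ‖x‖ ^ 2 := by
    have h := congrArg (fun y => ⟪x, y⟫_𝕜) hQx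
    simp only [inner_add_right, hQ.inner_apply_self, hP.inner_apply_self,
      inner_self_eq_norm_sq_to_K] at h
    exact_mod_cast h
  have hQle : ‖Q x‖ ^ 2 ≤ ‖x‖ ^ 2 := by gcongr; exact hQ.norm_apply_le x
  have hPx : P x = 0 := by
    rw [← norm_eq_zero]
    nlinarith [norm_nonneg (P x)]
  exact ⟨hPx, by rw [hQx, hPx, zero_add]⟩

theorem IsStarProjection.sub_add_one_apply_eq_zero_iff (hP : IsStarProjection P)
    (hQ : IsStarProjection Q) (x : E) : (Q - P + 1) x = 0 ↔ P x = x ∧ Q x = 0 := by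
  rw [and_comm, ← hQ.sub_sub_one_apply_eq_zero_iff hP, ← neg_eq_zero, ← neg_apply]
  congr! 2
  abel

variable {U : E →L[𝕜] E}

theorem adjoint_mul_mul_apply_eq_iff (hU : U ∈ unitary (E →L[𝕜] E)) (x y : E) :
    (adjoint U * P * U) x = y ↔ P (U x) = U y := by
  have hUU : ∀ z, U (adjoint U z) = z := fun z => by
    rw [← mul_apply_eq_comp, ← star_eq_adjoint, Unitary.mul_star_self_of_mem hU,
      one_apply_eq_self]
  have hUU' : ∀ z, adjoint U (U z) = z := fun z => by
    rw [← mul_apply_eq_comp, ← star_eq_adjoint, Unitary.star_mul_self_of_mem hU,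
      one_apply_eq_self]
  simp only [mul_apply_eq_comp]
  exact ⟨fun h => by rw [← h, hUU], fun h => by rw [h, hUU']⟩

theorem flux_sub_one_apply_eq_zero_iff (hU : U ∈ unitary (E →L[𝕜] E))
    (hP : IsStarProjection P) (x : E) :
    (adjoint U * P * U - P - 1) x = 0 ↔ P x = 0 ∧ P (U x) = U x := by
  have hQ : IsStarProjection (adjoint U * P * U) := hP.star_mul_mul_of_mem_unitary hU
  rw [hP.sub_sub_one_apply_eq_zero_iff hQ, adjoint_mul_mul_apply_eq_iff hU]

theorem flux_add_one_apply_eq_zero_iff (hU : U ∈ unitary (E →L[𝕜] E))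
    (hP : IsStarProjection P) (x : E) :
    (adjoint U * P * U - P + 1) x = 0 ↔ P x = x ∧ P (U x) = 0 := by
  have hQ : IsStarProjection (adjoint U * P * U) := hP.star_mul_mul_of_mem_unitary hU
  rw [hP.sub_add_one_apply_eq_zero_iff hQ, adjoint_mul_mul_apply_eq_iff hU, map_zero]

end StarProjection

section L2Supported

variable {ι 𝕜 : Type*} [RCLike 𝕜]

variable (𝕜) in
def l2Supported (s : Set ι) : Submodule 𝕜 ℓ²(ι, 𝕜) where
  carrier := {x | ∀ i ∉ s, x i = 0}
  add_mem' hx hy i hi := by simp [hx i hi, hy i hi]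
  zero_mem' _ _ := rfl
  smul_mem' c x hx i hi := by simp [hx i hi]

variable {s : Set ι}

theorem mem_l2Supported {x : ℓ²(ι, 𝕜)} : x ∈ l2Supported 𝕜 s ↔ ∀ i ∉ s, x i = 0 :=
  Iff.rfl

theorem isClosed_l2Supported : IsClosed (l2Supported 𝕜 s : Set ℓ²(ι, 𝕜)) := by
  have : (l2Supported 𝕜 s : Set ℓ²(ι, 𝕜)) = ⋂ i ∈ sᶜ, {x | x i = 0} := by
    ext x; simp [mem_l2Supported]
  rw [this]
  exact isClosed_biInter fun i _ =>
    isClosed_eq (lp.lipschitzWith_one_eval 2 i).continuous continuous_const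

instance : (l2Supported 𝕜 s).HasOrthogonalProjection :=
  haveI : CompleteSpace (l2Supported 𝕜 s) := isClosed_l2Supported.completeSpace_coe
  inferInstance

theorem orthogonal_l2Supported : (l2Supported 𝕜 s)ᗮ = l2Supported 𝕜 sᶜ := by
  classical
  ext x
  rw [Submodule.mem_orthogonal, mem_l2Supported]
  refine ⟨fun hx i hi => ?_, fun hx y hy => ?_⟩
  · have hsingle : lp.single 2 i (1 : 𝕜) ∈ l2Supported 𝕜 s := fun j hj => by
      rw [lp.single_apply, Pi.single_eq_of_ne (ne_of_mem_of_not_mem (not_not.mp hi) hj).symm]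
    simpa [lp.inner_single_left] using hx _ hsingle
  · rw [lp.inner_eq_tsum]
    refine (tsum_congr fun i => ?_).trans tsum_zero
    by_cases hi : i ∈ s
    · simp [hx i (not_not.mpr hi)]
    · simp [hy i hi]

theorem starProjection_l2Supported_apply_eq_zero_iff {x : ℓ²(ι, 𝕜)} :
    (l2Supported 𝕜 s).starProjection x = 0 ↔ ∀ i ∈ s, x i = 0 := by
  rw [Submodule.starProjection_apply_eq_zero_iff, orthogonal_l2Supported, mem_l2Supported]
  simp

theorem starProjection_l2Supported_apply_eq_self_iff {x : ℓ²(ι, 𝕜)} :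
    (l2Supported 𝕜 s).starProjection x = x ↔ ∀ i ∉ s, x i = 0 :=
  Submodule.starProjection_eq_self_iff

end L2Supported

section ScatteringNode

variable {𝕜 : Type*} [RCLike 𝕜] {n : Type*} [Fintype n]

theorem adjoint_apply_eq_sum_of_apply_eq_sum [DecidableEq n] {E : Type*} [NormedAddCommGroup E]
    [InnerProductSpace 𝕜 E] [CompleteSpace E] {U : E →L[𝕜] E} (hU : adjoint U * U = 1)
    {S : Matrix n n 𝕜} (hS : S ∈ Matrix.unitaryGroup n 𝕜) {a e : n → E}
    (hUa : ∀ i, U (a i) = ∑ l, S i l • e l) (l : n) :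
    adjoint U (e l) = ∑ i, star (S i l) • a i := by
  have hSS : ∀ l', ∑ i, star (S i l) * S i l' = (1 : Matrix n n 𝕜) l l' := fun l' => by
    rw [← Matrix.mem_unitaryGroup_iff'.mp hS, Matrix.mul_apply]
    rfl
  have hU_sum : U (∑ i, star (S i l) • a i) = e l := by
    simp only [map_sum, map_smul, hUa, Finset.smul_sum, smul_smul]
    rw [Finset.sum_comm]
    simp only [← Finset.sum_smul, hSS, Matrix.one_apply, ite_smul, one_smul, zero_smul,
      Finset.sum_ite_eq, Finset.mem_univ, if_true]
  rw [← hU_sum, ← mul_apply_eq_comp, hU, one_apply_eq_self]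

variable {ι : Type*} [DecidableEq ι] {U : ℓ²(ι, 𝕜) →L[𝕜] ℓ²(ι, 𝕜)}
  {S : Matrix n n 𝕜} {a e : n → ι}

theorem apply_eq_sum_of_apply_single [DecidableEq n] (hU : adjoint U * U = 1)
    (hS : S ∈ Matrix.unitaryGroup n 𝕜)
    (hUa : ∀ i, U (lp.single 2 (a i) 1) = ∑ l, S i l • lp.single 2 (e l) 1)
    (x : ℓ²(ι, 𝕜)) (l : n) : U x (e l) = ∑ i, S i l * x (a i) := by
  have h := adjoint_apply_eq_sum_of_apply_eq_sum hU hS hUa l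
  calc U x (e l) = ⟪lp.single 2 (e l) (1 : 𝕜), U x⟫_𝕜 := by simp [lp.inner_single_left]
    _ = ⟪adjoint U (lp.single 2 (e l) 1), x⟫_𝕜 := (adjoint_inner_left U x _).symm
    _ = ∑ i, S i l * x (a i) := by simp [h, sum_inner, inner_smul_left, lp.inner_single_left]

theorem apply_eq_sum_star_of_apply_single (hU : adjoint U * U = 1)
    (hUa : ∀ i, U (lp.single 2 (a i) 1) = ∑ l, S i l • lp.single 2 (e l) 1)
    (x : ℓ²(ι, 𝕜)) (i : n) : x (a i) = ∑ l, star (S i l) * U x (e l) := by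
  calc x (a i) = ⟪lp.single 2 (a i) (1 : 𝕜), x⟫_𝕜 := by simp [lp.inner_single_left]
    _ = ⟪U (lp.single 2 (a i) 1), U x⟫_𝕜 := by
      rw [← adjoint_inner_right, ← mul_apply_eq_comp, hU, one_apply_eq_self]
    _ = ∑ l, star (S i l) * U x (e l) := by
      simp [hUa, sum_inner, inner_smul_left, lp.inner_single_left]

end ScatteringNode

def scatteringMatrix {𝕜 : Type*} [RCLike 𝕜] (q r t : 𝕜) : Matrix (Fin 2) (Fin 2) 𝕜 :=
  q • !![r, -t; conj t, conj r]

section ScatteringMatrix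

variable {𝕜 : Type*} [RCLike 𝕜] {q r t : 𝕜}

theorem scatteringMatrix_mem_unitaryGroup (hq : ‖q‖ = 1) (hrt : ‖r‖ ^ 2 + ‖t‖ ^ 2 = 1) :
    scatteringMatrix q r t ∈ Matrix.unitaryGroup (Fin 2) 𝕜 := by
  have hq' : conj q * q = 1 := by rw [RCLike.conj_mul, hq]; simp
  have hrt' : conj r * r + conj t * t = 1 := by
    rw [RCLike.conj_mul, RCLike.conj_mul]; exact_mod_cast hrt
  rw [Matrix.mem_unitaryGroup_iff']
  ext i l
  fin_cases i <;> fin_cases l <;>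
    simp [scatteringMatrix, Matrix.mul_apply, Fin.sum_univ_two, Matrix.star_apply] <;>
    first | ring1 | linear_combination (conj q * q) * hrt' + hq'

theorem scatteringMatrix_apply_ne_zero (hq : q ≠ 0) (hr : r ≠ 0) (ht : t ≠ 0) (i l : Fin 2) :
    scatteringMatrix q r t i l ≠ 0 := by
  fin_cases i <;> fin_cases l <;> simp [scatteringMatrix, hq, hr, ht]

end ScatteringMatrix

def incoming : Cell → Fin 2 → ℤ × ℤ
  | (false, j, k) => ![(2 * j, 2 * k), (2 * j + 1, 2 * k - 1)]
  | (true, j, k) => ![(2 * j + 1, 2 * k), (2 * j + 2, 2 * k + 1)]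

def outgoing : Cell → Fin 2 → ℤ × ℤ
  | (false, j, k) => ![(2 * j, 2 * k - 1), (2 * j + 1, 2 * k)]
  | (true, j, k) => ![(2 * j + 2, 2 * k), (2 * j + 1, 2 * k + 1)]

/-- The two defining identities of the model, at the even and at the odd cells. -/
def IsChalkerCoddington (S : Cell → Matrix (Fin 2) (Fin 2) ℂ) (U : CCH →L[ℂ] CCH) : Prop :=
  ∀ c i, U (ket (incoming c i)) = ∑ l, S c i l • ket (outgoing c l)

def halfRow : Set (ℤ × ℤ) := {p | 1 ≤ p.1 ∧ p.2 = 0}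

theorem exists_incoming_eq (p : ℤ × ℤ) : ∃ c i, incoming c i = p := by
  obtain ⟨m, n⟩ := p
  rcases Int.even_or_odd' m with ⟨j, rfl | rfl⟩ <;>
    rcases Int.even_or_odd' n with ⟨k, rfl | rfl⟩
  · exact ⟨(false, j, k), 0, by simp [incoming]⟩
  · exact ⟨(true, j - 1, k), 1, by ext <;> simp [incoming]; ring⟩
  · exact ⟨(true, j, k), 0, by simp [incoming]⟩
  · exact ⟨(false, j, k + 1), 1, by ext <;> simp [incoming]; ring⟩

theorem incoming_origin_notMem_halfRow (i : Fin 2) : incoming (false, 0, 0) i ∉ halfRow := by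
  fin_cases i <;> simp [incoming, halfRow]

theorem cell_trichotomy (c : Cell) :
    c = (false, 0, 0) ∨ (∀ i, incoming c i ∉ halfRow ∧ outgoing c i ∉ halfRow) ∨
      (incoming c 0 ∈ halfRow ∧ incoming c 1 ∉ halfRow ∧
        (∃ l, outgoing c l ∈ halfRow) ∧ ∃ l, outgoing c l ∉ halfRow) := by
  obtain ⟨_ | _, j, k⟩ := c <;>
    simp only [incoming, outgoing, halfRow, Fin.forall_fin_two, Fin.exists_fin_two,
      Set.mem_ofPred_eq, Matrix.cons_val_zero, Matrix.cons_val_one, Prod.mk.injEq,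
      Bool.true_eq_false, true_and, false_and, false_or] <;>
    omega

section ChalkerCoddington

variable {S : Cell → Matrix (Fin 2) (Fin 2) ℂ} {U : CCH →L[ℂ] CCH}

def originState (M : Matrix (Fin 2) (Fin 2) ℂ) : CCH :=
  M 1 0 • ket (0, 0) - M 0 0 • ket (1, -1)

theorem ket_apply (p q : ℤ × ℤ) : ket p q = if q = p then 1 else 0 := by
  simp [ket, Pi.single_apply]

theorem originState_apply (M : Matrix (Fin 2) (Fin 2) ℂ) (p : ℤ × ℤ) :
    originState M p = if p = (0, 0) then M 1 0 else if p = (1, -1) then -M 0 0 else 0 := by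
  simp only [originState, lp.coeFn_sub, lp.coeFn_smul, Pi.sub_apply, Pi.smul_apply, ket_apply]
  split_ifs <;> simp_all

theorem originState_ne_zero {M : Matrix (Fin 2) (Fin 2) ℂ} (hM : M 0 0 ≠ 0) :
    originState M ≠ 0 := fun h => by
  simpa [originState_apply, hM] using congrArg (fun x : CCH => x (1, -1)) h

theorem apply_incoming_eq_zero (hU : adjoint U * U = 1)
    (hS : ∀ c, S c ∈ Matrix.unitaryGroup (Fin 2) ℂ) (hS0 : ∀ c i l, S c i l ≠ 0)
    (hUin : IsChalkerCoddington S U) {x : CCH}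
    (hx : ∀ p ∈ halfRow, x p = 0) (hUx : ∀ p ∉ halfRow, U x p = 0) {c : Cell}
    (hc : c ≠ (false, 0, 0)) (i : Fin 2) : x (incoming c i) = 0 := by
  rcases cell_trichotomy c with rfl | hout | ⟨hin, -, -, l, hl⟩
  · exact absurd rfl hc
  · rw [apply_eq_sum_star_of_apply_single hU (hUin c) x i, Fin.sum_univ_two,
      hUx _ (hout 0).2, hUx _ (hout 1).2]
    simp
  · fin_cases i
    · exact hx _ hin
    · have h := apply_eq_sum_of_apply_single hU (hS c) (hUin c) x l
      rw [hUx _ hl, Fin.sum_univ_two, hx _ hin, mul_zero, zero_add] at h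
      exact (mul_eq_zero.mp h.symm).resolve_left (hS0 c 1 l)

theorem eq_smul_originState (hU : adjoint U * U = 1)
    (hS : ∀ c, S c ∈ Matrix.unitaryGroup (Fin 2) ℂ) (hS0 : ∀ c i l, S c i l ≠ 0)
    (hUin : IsChalkerCoddington S U) {x : CCH}
    (hx : ∀ p ∈ halfRow, x p = 0) (hUx : ∀ p ∉ halfRow, U x p = 0) :
    x = (x (0, 0) / S (false, 0, 0) 1 0) • originState (S (false, 0, 0)) := by
  have hrel : S (false, 0, 0) 0 0 * x (0, 0) + S (false, 0, 0) 1 0 * x (1, -1) = 0 := by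
    have h := apply_eq_sum_of_apply_single hU (hS _) (hUin (false, 0, 0)) x 0
    rw [hUx _ (by simp [outgoing, halfRow])] at h
    simpa [incoming, Fin.sum_univ_two] using h.symm
  have hvanish : ∀ p, p ≠ (0, 0) → p ≠ (1, -1) → x p = 0 := by
    intro p h0 h1
    obtain ⟨c, i, rfl⟩ := exists_incoming_eq p
    refine apply_incoming_eq_zero hU hS hS0 hUin hx hUx (fun hc => ?_) i
    subst hc
    fin_cases i <;> simp_all [incoming]
  have hS10 := hS0 (false, 0, 0) 1 0
  ext p
  by_cases h0 : p = (0, 0)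
  · subst h0; simp [originState_apply, hS10]
  by_cases h1 : p = (1, -1)
  · subst h1; simp [originState_apply]; field_simp; linear_combination hrel
  · simp [originState_apply, h0, h1, hvanish p h0 h1]

theorem apply_originState
    (hUin : IsChalkerCoddington S U) :
    U (originState (S (false, 0, 0))) =
      (S (false, 0, 0) 1 0 * S (false, 0, 0) 0 1 - S (false, 0, 0) 0 0 * S (false, 0, 0) 1 1) •
        ket (1, 0) := by
  have h0 := hUin (false, 0, 0) 0
  have h1 := hUin (false, 0, 0) 1
  simp only [incoming, outgoing, Fin.sum_univ_two] at h0 h1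
  norm_num at h0 h1
  rw [originState, map_sub, map_smul, map_smul, h0, h1]
  module

theorem eq_zero_of_forall_notMem_halfRow (hU : adjoint U * U = 1)
    (hS : ∀ c, S c ∈ Matrix.unitaryGroup (Fin 2) ℂ) (hS0 : ∀ c i l, S c i l ≠ 0)
    (hUin : IsChalkerCoddington S U) {x : CCH}
    (hx : ∀ p ∉ halfRow, x p = 0) (hUx : ∀ p ∈ halfRow, U x p = 0) : x = 0 := by
  ext p
  by_cases hp : p ∈ halfRow
  swap
  · exact hx p hp
  obtain ⟨c, i, rfl⟩ := exists_incoming_eq p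
  rcases cell_trichotomy c with rfl | hc | ⟨-, hin, ⟨l, hl⟩, -⟩
  · exact absurd hp (incoming_origin_notMem_halfRow i)
  · exact absurd hp (hc i).1
  · fin_cases i
    · have h := apply_eq_sum_of_apply_single hU (hS c) (hUin c) x l
      rw [hUx _ hl, Fin.sum_univ_two, hx _ hin, mul_zero, add_zero] at h
      exact (mul_eq_zero.mp h.symm).resolve_left (hS0 c 0 l)
    · exact absurd hp hin

theorem ker_flux_sub_one_eq_span (hU : U ∈ unitary (CCH →L[ℂ] CCH))
    (hS : ∀ c, S c ∈ Matrix.unitaryGroup (Fin 2) ℂ) (hS0 : ∀ c i l, S c i l ≠ 0)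
    (hUin : IsChalkerCoddington S U) :
    LinearMap.ker ((adjoint U * (l2Supported ℂ halfRow).starProjection * U -
        (l2Supported ℂ halfRow).starProjection - 1 : CCH →L[ℂ] CCH) : CCH →ₗ[ℂ] CCH) =
      ℂ ∙ originState (S (false, 0, 0)) := by
  have hUU : adjoint U * U = 1 := Unitary.star_mul_self_of_mem hU
  ext x
  rw [LinearMap.mem_ker, ContinuousLinearMap.coe_coe,
    flux_sub_one_apply_eq_zero_iff hU isStarProjection_starProjection,
    starProjection_l2Supported_apply_eq_zero_iff, starProjection_l2Supported_apply_eq_self_iff,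
    Submodule.mem_span_singleton]
  constructor
  · rintro ⟨hx, hUx⟩
    exact ⟨_, (eq_smul_originState hUU hS hS0 hUin hx hUx).symm⟩
  · rintro ⟨z, rfl⟩
    refine ⟨fun p hp => ?_, fun p hp => ?_⟩
    · have : p ≠ (0, 0) ∧ p ≠ (1, -1) := by
        constructor <;> rintro rfl <;> simp [halfRow] at hp
      simp [originState_apply, this]
    · have : p ≠ (1, 0) := by rintro rfl; simp [halfRow] at hp
      simp [apply_originState hUin, ket_apply, this]

theorem ker_flux_add_one_eq_bot (hU : U ∈ unitary (CCH →L[ℂ] CCH))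
    (hS : ∀ c, S c ∈ Matrix.unitaryGroup (Fin 2) ℂ) (hS0 : ∀ c i l, S c i l ≠ 0)
    (hUin : IsChalkerCoddington S U) :
    LinearMap.ker ((adjoint U * (l2Supported ℂ halfRow).starProjection * U -
        (l2Supported ℂ halfRow).starProjection + 1 : CCH →L[ℂ] CCH) : CCH →ₗ[ℂ] CCH) =
      ⊥ := by
  refine (Submodule.eq_bot_iff _).mpr fun x hx => ?_
  rw [LinearMap.mem_ker, ContinuousLinearMap.coe_coe,
    flux_add_one_apply_eq_zero_iff hU isStarProjection_starProjection,
    starProjection_l2Supported_apply_eq_zero_iff,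
    starProjection_l2Supported_apply_eq_self_iff] at hx
  exact eq_zero_of_forall_notMem_halfRow (Unitary.star_mul_self_of_mem hU) hS hS0 hUin hx.1 hx.2

end ChalkerCoddington

/-- Let `U` be a Chalker–Coddington unitary with scattering matrices
`S_z = q_z [[r_z, −t_z], [t̄_z, r̄_z]]` satisfying `0 < c₁ < |r_z| < c₂ < 1` for all `z`
(e.g. the critical model). Then there exists an orthogonal projection `P` such that the flux
`Φ = U*PU − P` has finite-dimensional eigenspaces `ker(Φ ∓ 1)` with
`dim ker(Φ − 1) ≠ dim ker(Φ + 1)`, i.e. `ind(Φ) ≠ 0`. -/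
theorem stmt_19
    (q r t : Cell → ℂ) (S : Cell → Matrix (Fin 2) (Fin 2) ℂ)
    (hq : ∀ c, ‖q c‖ = 1) (hrt : ∀ c, ‖r c‖ ^ 2 + ‖t c‖ ^ 2 = 1)
    (hS : ∀ c, S c = q c • !![r c, -(t c); (starRingEnd ℂ) (t c), (starRingEnd ℂ) (r c)])
    (c₁ c₂ : ℝ) (hc₁ : 0 < c₁) (hc₂ : c₂ < 1)
    (hr : ∀ c, c₁ < ‖r c‖ ∧ ‖r c‖ < c₂)
    (U : CCH →L[ℂ] CCH)
    (hUunit : adjoint U * U = 1 ∧ U * adjoint U = 1)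
    (hUeven : ∀ j k : ℤ,
      U (ket (2 * j, 2 * k))
          = S (false, j, k) 0 0 • ket (2 * j, 2 * k - 1)
            + S (false, j, k) 0 1 • ket (2 * j + 1, 2 * k) ∧
      U (ket (2 * j + 1, 2 * k - 1))
          = S (false, j, k) 1 0 • ket (2 * j, 2 * k - 1)
            + S (false, j, k) 1 1 • ket (2 * j + 1, 2 * k))
    (hUodd : ∀ j k : ℤ,
      U (ket (2 * j + 1, 2 * k))
          = S (true, j, k) 0 0 • ket (2 * j + 2, 2 * k)
            + S (true, j, k) 0 1 • ket (2 * j + 1, 2 * k + 1) ∧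
      U (ket (2 * j + 2, 2 * k + 1))
          = S (true, j, k) 1 0 • ket (2 * j + 2, 2 * k)
            + S (true, j, k) 1 1 • ket (2 * j + 1, 2 * k + 1)) :
    ∃ P : CCH →L[ℂ] CCH,
      IsSelfAdjoint P ∧ P * P = P ∧
      FiniteDimensional ℂ (LinearMap.ker (((adjoint U * P * U - P - 1 : CCH →L[ℂ] CCH) : CCH →ₗ[ℂ] CCH))) ∧
      FiniteDimensional ℂ (LinearMap.ker (((adjoint U * P * U - P + 1 : CCH →L[ℂ] CCH) : CCH →ₗ[ℂ] CCH))) ∧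
      Module.finrank ℂ (LinearMap.ker (((adjoint U * P * U - P - 1 : CCH →L[ℂ] CCH) : CCH →ₗ[ℂ] CCH)))
        ≠ Module.finrank ℂ (LinearMap.ker (((adjoint U * P * U - P + 1 : CCH →L[ℂ] CCH) : CCH →ₗ[ℂ] CCH))) := by
  have hU : U ∈ unitary (CCH →L[ℂ] CCH) := Unitary.mem_iff.mpr hUunit
  have hSu : ∀ c, S c ∈ Matrix.unitaryGroup (Fin 2) ℂ := fun c =>
    hS c ▸ scatteringMatrix_mem_unitaryGroup (hq c) (hrt c)
  have hS0 : ∀ c i l, S c i l ≠ 0 := by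
    intro c
    have hq0 : q c ≠ 0 := norm_ne_zero_iff.mp (by rw [hq c]; exact one_ne_zero)
    have hr0 : r c ≠ 0 := norm_ne_zero_iff.mp (hc₁.trans (hr c).1).ne'
    have ht0 : t c ≠ 0 := by
      intro h
      have : ‖r c‖ ^ 2 = 1 := by simpa [h] using hrt c
      nlinarith [(hr c).2, norm_nonneg (r c)]
    exact hS c ▸ scatteringMatrix_apply_ne_zero hq0 hr0 ht0
  have hUin : IsChalkerCoddington S U := by
    rintro ⟨_ | _, j, k⟩ i <;> fin_cases i <;>
      simp [incoming, outgoing, Fin.sum_univ_two, hUeven, hUodd]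
  refine ⟨(l2Supported ℂ halfRow).starProjection, isSelfAdjoint_starProjection _,
    (l2Supported ℂ halfRow).isIdempotentElem_starProjection, ?_⟩
  rw [ker_flux_sub_one_eq_span hU hSu hS0 hUin, ker_flux_add_one_eq_bot hU hSu hS0 hUin,
    finrank_span_singleton (originState_ne_zero (hS0 _ 0 0)), finrank_bot]
  exact ⟨inferInstance, inferInstance, one_ne_zero⟩
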